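/- arXiv:1810.01699 — 4 statements merged into one kernel-verified Lean document; each statement's English description precedes it below -/
import Mathlib

section
/- (Lemma 3.8(i), parabolic parameter in the ferromagnetic regime) Let d ≥ 2 be an integer and let b ∈ ((d−1)/(d+1), 1). Then there exists a unique θ ∈ (0,π) such that for ξ = e^{iθ} the map f_{ξ,b} has a fixed point R ∈ ∂𝔻 with |f'_{ξ,b}(R)| = 1; moreover, for this θ and ξ = e^{iθ}, any fixed point R ∈ ∂𝔻 of f_{ξ,b} with |f'_{ξ,b}(R)| = 1 satisfies f'_{ξ,b}(R) = 1 and is a solution of the quadratic equation R² + ((d(b²−1)+(1+b²))/b)·R + 1 = 0. The same θ works for ξ = e^{−iθ}, with the fixed point replaced by its complex conjugate. -/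
/-!
At a fixed point `R` on the unit circle the derivative is `f'(R) = d (1 - b²) / |R + b|²`, a
positive real, because `(R + b)(bR + 1) = R |R + b|²` there. So `|f'(R)| = 1` forces `f'(R) = 1`
and `|R + b|² = d (1 - b²)`; this fixes `Re R`, hence `R` up to conjugation, and then
`ξ = R / u(R)^d` with `u(R) = (R + b)/(bR + 1)`. Writing `R = (1 + it)/(1 - it) = e^{2i arctan t}`,
the Möbius factor becomes `t ↦ l t` with `l = (1 - b)/(1 + b)`, so `θ = 2 arctan t - 2d arctan (l t)`,
while the conjugate point gives `-θ`. For `b > (d - 1)/(d + 1)` one has `d l < 1`, and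
`θ > 0` follows from `arctan (l t) < l t` and `t / √(1 + t²) = sin (arctan t) ≤ arctan t`.
-/

/-- The rational map `f_{ξ,b}(R) = ξ·((R+b)/(bR+1))^d` associated to the Ising model. -/
noncomputable def fIsing (d : ℕ) (ξ b R : ℂ) : ℂ := ξ * ((R + b) / (b * R + 1)) ^ d

open Complex Set Function ComplexConjugate
open scoped Real

namespace Real

lemma arctan_lt_self {x : ℝ} (hx : 0 < x) : arctan x < x := by
  simpa [tan_arctan] using lt_tan (arctan_pos.2 hx) (arctan_lt_pi_div_two x)

lemma div_sqrt_one_add_sq_le_arctan {x : ℝ} (hx : 0 ≤ x) : x / √(1 + x ^ 2) ≤ arctan x :=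
  sin_arctan x ▸ sin_le (arctan_nonneg.2 hx)

lemma mul_arctan_mul_lt_arctan {d l t : ℝ} (hd : 2 ≤ d) (hl : 0 < l) (hdl : d * l < 1)
    (ht : 0 < t) (htl : t ^ 2 * (l * (d - l)) = 1 - d * l) :
    d * arctan (l * t) < arctan t := by
  have hsq : (d * l) ^ 2 * (1 + t ^ 2) ≤ 1 := by
    -- after multiplying by `l (d - l)` and using `htl`, this is `l (1 - d l) (d - l - d l²) ≥ 0`
    have hdl' : 0 < l * (d - l) := mul_pos hl (by nlinarith)
    refine le_of_mul_le_mul_right ?_ hdl'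
    nlinarith [mul_pos (mul_pos hl (sub_pos.2 hdl)) (by nlinarith : 0 < d - l - d * l ^ 2)]
  have hsqrt : d * l * √(1 + t ^ 2) ≤ 1 := by
    rw [← sqrt_sq (by positivity : 0 ≤ d * l), ← sqrt_mul (sq_nonneg _)]
    exact sqrt_le_one.2 hsq
  calc d * arctan (l * t) < d * (l * t) := by gcongr; exact arctan_lt_self (by positivity)
    _ ≤ t / √(1 + t ^ 2) := by
      rw [le_div_iff₀ (by positivity)]
      nlinarith
    _ ≤ arctan t := div_sqrt_one_add_sq_le_arctan ht.le

lemma two_mul_arctan_sub_mem_Ioo {d l t : ℝ} (hd : 2 ≤ d) (hl : 0 < l) (hdl : d * l < 1)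
    (ht : 0 < t) (htl : t ^ 2 * (l * (d - l)) = 1 - d * l) :
    2 * arctan t - 2 * d * arctan (l * t) ∈ Ioo 0 π := by
  have hlt := mul_arctan_mul_lt_arctan hd hl hdl ht htl
  have hpos : 0 < arctan (l * t) := arctan_pos.2 (by positivity)
  constructor <;> nlinarith [arctan_lt_pi_div_two t]

end Real

lemma add_ne_zero_of_norm_eq_one {R b : ℂ} (hR : ‖R‖ = 1) (hb : ‖b‖ ≠ 1) : R + b ≠ 0 := by
  intro h
  rw [eq_neg_of_add_eq_zero_right h, norm_neg] at hb
  exact hb hR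

lemma mul_add_one_ne_zero_of_norm_eq_one {R b : ℂ} (hR : ‖R‖ = 1) (hb : ‖b‖ ≠ 1) :
    b * R + 1 ≠ 0 := by
  intro h
  have := congrArg norm (eq_neg_of_add_eq_zero_left h)
  rw [norm_mul, hR, mul_one, norm_neg, norm_one] at this
  exact hb this

lemma normSq_add_ofReal {R : ℂ} (hR : ‖R‖ = 1) (b : ℝ) :
    normSq (R + b) = 1 + b ^ 2 + 2 * b * R.re := by
  rw [normSq_add, normSq_eq_norm_sq, hR, normSq_ofReal, conj_ofReal, re_mul_ofReal]
  ring

lemma add_ofReal_mul_ofReal_mul_add_one {R : ℂ} (hR : ‖R‖ = 1) (b : ℝ) :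
    (R + b) * (b * R + 1) = R * normSq (R + b) := by
  have hRR : R * conj R = 1 := by
    rw [mul_conj, normSq_eq_norm_sq, hR]; norm_num
  rw [← mul_conj, map_add, conj_ofReal]
  linear_combination (-(R + b)) * hRR

lemma eq_or_eq_conj_of_normSq_add_eq {R v : ℂ} (hR : ‖R‖ = 1) (hv : ‖v‖ = 1) {b : ℝ}
    (hb : b ≠ 0) (h : normSq (R + b) = normSq (v + b)) : R = v ∨ R = conj v := by
  rw [normSq_add_ofReal hR, normSq_add_ofReal hv] at h
  have hre : R.re = v.re := mul_left_cancel₀ (mul_ne_zero two_ne_zero hb) (by linarith)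
  have him : R.im ^ 2 = v.im ^ 2 := by
    rw [← sq_norm_sub_sq_re, ← sq_norm_sub_sq_re, hR, hv, hre]
  rcases sq_eq_sq_iff_eq_or_eq_neg.1 him with him | him
  · exact Or.inl (Complex.ext hre him)
  · exact Or.inr (Complex.ext (by simpa using hre) (by simpa using him))

lemma quadratic_of_normSq_add_eq {R : ℂ} (hR : ‖R‖ = 1) {b c : ℝ} (hb : b ≠ 0)
    (h : normSq (R + b) = c) : R ^ 2 + ((1 + b ^ 2 - c) / b) * R + 1 = 0 := by
  have hprod := add_ofReal_mul_ofReal_mul_add_one hR b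
  rw [h] at hprod
  have hb' : (b : ℂ) ≠ 0 := ofReal_ne_zero.2 hb
  field_simp
  linear_combination hprod

lemma conj_exp_ofReal_mul_I (θ : ℝ) : conj (exp (θ * I)) = exp (-(θ * I)) := by
  rw [← exp_conj, map_mul, conj_ofReal, conj_I, mul_neg]

lemma arg_exp_ofReal_mul_I {θ : ℝ} (hθ : θ ∈ Ioc (-π) π) : arg (exp (θ * I)) = θ := by
  rw [arg_exp_mul_I, toIocMod_eq_self]
  simpa [two_mul] using hθ

noncomputable def cayley (s : ℝ) : ℂ := (1 + s * I) / (1 - s * I)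

lemma one_sub_ofReal_mul_I_ne_zero (s : ℝ) : 1 - (s : ℂ) * I ≠ 0 := by
  intro h
  simpa using congrArg re h

lemma exp_two_mul_arctan_mul_I (s : ℝ) : exp (↑(2 * Real.arctan s) * I) = cayley s := by
  have hs : (0 : ℝ) < 1 + s ^ 2 := by positivity
  have hcos : Real.cos (2 * Real.arctan s) = (1 - s ^ 2) / (1 + s ^ 2) := by
    rw [Real.cos_two_mul, Real.cos_sq_arctan]
    field_simp
    ring
  have hsin : Real.sin (2 * Real.arctan s) = 2 * s / (1 + s ^ 2) := by
    rw [Real.sin_two_mul, Real.sin_arctan, Real.cos_arctan]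
    field_simp
    rw [Real.sq_sqrt hs.le]
  have hs' : (1 + s ^ 2 : ℂ) ≠ 0 := by exact_mod_cast hs.ne'
  rw [exp_mul_I, ← ofReal_cos, ← ofReal_sin, hcos, hsin, cayley,
    eq_div_iff (one_sub_ofReal_mul_I_ne_zero s)]
  push_cast
  field_simp
  linear_combination (-2 * (s : ℂ) ^ 2) * I_sq

lemma norm_cayley (s : ℝ) : ‖cayley s‖ = 1 := by
  rw [← exp_two_mul_arctan_mul_I, norm_exp_ofReal_mul_I]

lemma cayley_re (s : ℝ) : (cayley s).re = (1 - s ^ 2) / (1 + s ^ 2) := by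
  rw [← exp_two_mul_arctan_mul_I, exp_ofReal_mul_I_re, Real.cos_two_mul, Real.cos_sq_arctan]
  field_simp
  ring

lemma cayley_add_div_mul_cayley_add_one {b : ℝ} (hb : 1 + b ≠ 0) (t : ℝ) :
    (cayley t + b) / (b * cayley t + 1) = cayley ((1 - b) / (1 + b) * t) := by
  have hb' : (1 + b : ℂ) ≠ 0 := by exact_mod_cast hb
  have ht := one_sub_ofReal_mul_I_ne_zero t
  have hlt := one_sub_ofReal_mul_I_ne_zero ((1 - b) / (1 + b) * t)
  have hnum : cayley t + b = (1 + b) * (1 + ↑((1 - b) / (1 + b) * t) * I) / (1 - t * I) := by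
    rw [cayley, eq_div_iff ht]
    push_cast
    field_simp
    ring
  have hden : b * cayley t + 1 = (1 + b) * (1 - ↑((1 - b) / (1 + b) * t) * I) / (1 - t * I) := by
    rw [cayley, eq_div_iff ht]
    push_cast
    field_simp
    ring
  rw [hnum, hden, div_div_div_cancel_right₀ ht, mul_div_mul_left _ _ hb', cayley]

lemma isFixedPt_fIsing_cayley (d : ℕ) {b : ℝ} (hb : 1 + b ≠ 0) (t : ℝ) :
    IsFixedPt
      (fIsing d (exp (↑(2 * Real.arctan t - 2 * d * Real.arctan ((1 - b) / (1 + b) * t)) * I)) b)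
      (cayley t) := by
  have hexp : exp (↑(2 * Real.arctan t - 2 * d * Real.arctan ((1 - b) / (1 + b) * t)) * I)
      = cayley t / cayley ((1 - b) / (1 + b) * t) ^ d := by
    rw [← exp_two_mul_arctan_mul_I, ← exp_two_mul_arctan_mul_I, ← exp_nat_mul, ← exp_sub]
    push_cast
    ring_nf
  have hne : cayley ((1 - b) / (1 + b) * t) ≠ 0 := by
    rw [← norm_ne_zero_iff, norm_cayley]; exact one_ne_zero
  rw [IsFixedPt, fIsing, cayley_add_div_mul_cayley_add_one hb, hexp,
    div_mul_cancel₀ _ (pow_ne_zero d hne)]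

lemma hasDerivAt_fIsing (d : ℕ) (ξ b R : ℂ) (h : b * R + 1 ≠ 0) :
    HasDerivAt (fIsing d ξ b)
      (ξ * (d * ((R + b) / (b * R + 1)) ^ (d - 1) * ((1 - b ^ 2) / (b * R + 1) ^ 2))) R := by
  have hmob : HasDerivAt (fun R : ℂ => (R + b) / (b * R + 1))
      ((1 * (b * R + 1) - (R + b) * b) / (b * R + 1) ^ 2) R :=
    ((hasDerivAt_id R).add_const b).div
      (by simpa using ((hasDerivAt_id R).const_mul b).add_const 1) h
  exact ((hmob.pow d).const_mul ξ).congr_deriv (by ring)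

lemma fIsing_injective_left (d : ℕ) {b R : ℂ} (hR : ‖R‖ = 1) (hb : ‖b‖ ≠ 1) :
    Injective (fIsing d · b R) := fun _ _ h =>
  mul_right_cancel₀ (pow_ne_zero d (div_ne_zero (add_ne_zero_of_norm_eq_one hR hb)
    (mul_add_one_ne_zero_of_norm_eq_one hR hb))) h

lemma isFixedPt_fIsing_conj {d : ℕ} {ξ R : ℂ} {b : ℝ} (h : IsFixedPt (fIsing d ξ b) R) :
    IsFixedPt (fIsing d (conj ξ) b) (conj R) := by
  simpa only [IsFixedPt, fIsing, map_mul, map_pow, map_div₀, map_add, map_one, conj_ofReal]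
    using congrArg conj h

lemma deriv_fIsing_of_isFixedPt (d : ℕ) (ξ : ℂ) {b : ℝ} (hb : |b| ≠ 1) {R : ℂ} (hR : ‖R‖ = 1)
    (hfix : IsFixedPt (fIsing d ξ b) R) :
    deriv (fIsing d ξ b) R = ((d * (1 - b ^ 2) / normSq (R + b) : ℝ) : ℂ) := by
  have hb' : ‖(b : ℂ)‖ ≠ 1 := by rwa [norm_real, Real.norm_eq_abs]
  have hRb := add_ne_zero_of_norm_eq_one hR hb'
  have hbR := mul_add_one_ne_zero_of_norm_eq_one hR hb'
  have hn : (normSq (R + b) : ℂ) ≠ 0 := ofReal_ne_zero.2 (normSq_eq_zero.not.2 hRb)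
  set u := (R + b) / (b * R + 1) with hu
  have hpow : (d : ℂ) * u ^ (d - 1) * u = d * u ^ d := by
    rcases eq_or_ne d 0 with rfl | hd
    · simp
    · rw [mul_assoc, pow_sub_one_mul hd]
  have hmul : u * (b * R + 1) ^ 2 = R * normSq (R + b) := by
    rw [← add_ofReal_mul_ofReal_mul_add_one hR, hu]
    field_simp
  rw [(hasDerivAt_fIsing d ξ b R hbR).deriv]
  refine mul_left_cancel₀ (mul_ne_zero (div_ne_zero hRb hbR) (pow_ne_zero 2 hbR)) ?_
  calc u * (b * R + 1) ^ 2 * (ξ * (d * u ^ (d - 1) * ((1 - b ^ 2) / (b * R + 1) ^ 2)))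
      = ξ * (d * u ^ (d - 1) * u) * (1 - b ^ 2) := by field_simp
    _ = d * (ξ * u ^ d) * (1 - b ^ 2) := by rw [hpow]; ring
    _ = u * (b * R + 1) ^ 2 * ((d * (1 - b ^ 2) / normSq (R + b) : ℝ) : ℂ) := by
        rw [show ξ * u ^ d = R from hfix, hmul]
        push_cast
        field_simp

lemma deriv_fIsing_eq_one_iff {d : ℕ} {ξ : ℂ} {b : ℝ} (hb : |b| ≠ 1) {R : ℂ} (hR : ‖R‖ = 1)
    (hfix : IsFixedPt (fIsing d ξ b) R) :
    deriv (fIsing d ξ b) R = 1 ↔ normSq (R + b) = d * (1 - b ^ 2) := by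
  have hb' : ‖(b : ℂ)‖ ≠ 1 := by rwa [norm_real, Real.norm_eq_abs]
  rw [deriv_fIsing_of_isFixedPt d ξ hb hR hfix, ofReal_eq_one,
    div_eq_one_iff_eq (normSq_eq_zero.not.2 (add_ne_zero_of_norm_eq_one hR hb')), eq_comm]

lemma deriv_fIsing_eq_one_of_norm_eq_one {d : ℕ} {ξ : ℂ} {b : ℝ} (hb : |b| < 1) {R : ℂ}
    (hR : ‖R‖ = 1) (hfix : IsFixedPt (fIsing d ξ b) R) (h : ‖deriv (fIsing d ξ b) R‖ = 1) :
    deriv (fIsing d ξ b) R = 1 := by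
  have hb2 : 0 ≤ 1 - b ^ 2 := sub_nonneg.2 ((sq_lt_one_iff_abs_lt_one b).2 hb).le
  rw [deriv_fIsing_of_isFixedPt d ξ hb.ne hR hfix, norm_real,
    Real.norm_of_nonneg (div_nonneg (mul_nonneg d.cast_nonneg hb2) (normSq_nonneg _))] at h
  rw [deriv_fIsing_of_isFixedPt d ξ hb.ne hR hfix, h, ofReal_one]

lemma eq_of_isFixedPt_fIsing_exp {d : ℕ} {b : ℝ} (hb₀ : 0 < b) (hb₁ : b < 1) {θ θ' : ℝ}
    (hθ : θ ∈ Ioo 0 π) (hθ' : θ' ∈ Ioo 0 π) {A R : ℂ} (hA : ‖A‖ = 1) (hR : ‖R‖ = 1)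
    (hfixA : IsFixedPt (fIsing d (exp (θ * I)) b) A)
    (hfixR : IsFixedPt (fIsing d (exp (θ' * I)) b) R) (h : normSq (R + b) = normSq (A + b)) :
    θ' = θ := by
  have hb : ‖(b : ℂ)‖ ≠ 1 := by rw [norm_real, Real.norm_of_nonneg hb₀.le]; exact hb₁.ne
  have harg : ∀ φ ∈ Ioo 0 π, arg (exp (φ * I)) = φ := fun φ hφ =>
    arg_exp_ofReal_mul_I ⟨by linarith [hφ.1, Real.pi_pos], hφ.2.le⟩
  rcases eq_or_eq_conj_of_normSq_add_eq hR hA hb₀.ne' h with rfl | rfl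
  · have hexp := fIsing_injective_left d hR hb (hfixR.eq.trans hfixA.eq.symm)
    simpa [harg θ' hθ', harg θ hθ] using congrArg arg hexp
  · have hfixc := isFixedPt_fIsing_conj hfixA
    have hexp := fIsing_injective_left d hR hb (hfixR.eq.trans hfixc.eq.symm)
    rw [conj_exp_ofReal_mul_I, ← neg_mul, ← ofReal_neg] at hexp
    have := congrArg arg hexp
    rw [harg θ' hθ', arg_exp_ofReal_mul_I ⟨by linarith [hθ.2], by linarith [hθ.1, Real.pi_pos]⟩]
      at this
    linarith [hθ.1, hθ'.1]

lemma exists_isFixedPt_fIsing_exp {d : ℕ} (hd : 2 ≤ d) {b : ℝ}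
    (hb₁ : ((d : ℝ) - 1) / ((d : ℝ) + 1) < b) (hb₂ : b < 1) :
    ∃ θ ∈ Ioo 0 π, ∃ A : ℂ, ‖A‖ = 1 ∧ IsFixedPt (fIsing d (exp (θ * I)) b) A ∧
      normSq (A + b) = d * (1 - b ^ 2) := by
  have hd' : (2 : ℝ) ≤ d := by exact_mod_cast hd
  have hb : 0 < 1 + b := by
    linarith [(div_nonneg (by linarith) (by linarith) : (0 : ℝ) ≤ (d - 1) / (d + 1))]
  set l := (1 - b) / (1 + b) with hl_def
  have hl : 0 < l := div_pos (by linarith) hb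
  have hdl : d * l < 1 := by
    rw [div_lt_iff₀ (by linarith)] at hb₁
    rw [hl_def, mul_div_assoc', div_lt_one hb]
    linarith
  have hpos : 0 < (1 - d * l) / (l * (d - l)) := div_pos (by linarith) (mul_pos hl (by nlinarith))
  set t := √((1 - d * l) / (l * (d - l)))
  have ht : 0 < t := Real.sqrt_pos.2 hpos
  have htl : t ^ 2 * (l * (d - l)) = 1 - d * l := by
    rw [Real.sq_sqrt hpos.le, div_mul_cancel₀ _ (mul_pos hl (by nlinarith)).ne']
  refine ⟨_, Real.two_mul_arctan_sub_mem_Ioo hd' hl hdl ht htl, cayley t, norm_cayley t,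
    isFixedPt_fIsing_cayley d hb.ne' t, ?_⟩
  rw [normSq_add_ofReal (norm_cayley t), cayley_re]
  rw [hl_def] at htl
  field_simp at htl ⊢
  linear_combination -htl

/-- Lemma 3.8(i): for `b ∈ ((d-1)/(d+1), 1)` there is a unique `θ ∈ (0,π)` for which
`f_{e^{iθ},b}` has a fixed point on the unit circle whose derivative has modulus 1;
any such fixed point has derivative exactly 1 and satisfies the stated quadratic
equation, and the same `θ` works for `e^{-iθ}` with the conjugate fixed point. -/
theorem fIsing_parabolic_parameter_ferro (d : ℕ) (hd : 2 ≤ d) (b : ℝ)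
    (hb₁ : ((d : ℝ) - 1) / ((d : ℝ) + 1) < b) (hb₂ : b < 1) :
    ∃ θ : ℝ, θ ∈ Set.Ioo 0 Real.pi ∧
      (∃ R : ℂ, ‖R‖ = 1 ∧
        fIsing d (Complex.exp (θ * Complex.I)) (b : ℂ) R = R ∧
        ‖deriv (fIsing d (Complex.exp (θ * Complex.I)) (b : ℂ)) R‖ = 1) ∧
      (∀ θ' ∈ Set.Ioo 0 Real.pi,
        (∃ R : ℂ, ‖R‖ = 1 ∧
          fIsing d (Complex.exp (θ' * Complex.I)) (b : ℂ) R = R ∧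
          ‖deriv (fIsing d (Complex.exp (θ' * Complex.I)) (b : ℂ)) R‖ = 1) →
        θ' = θ) ∧
      (∀ R : ℂ, ‖R‖ = 1 →
        fIsing d (Complex.exp (θ * Complex.I)) (b : ℂ) R = R →
        ‖deriv (fIsing d (Complex.exp (θ * Complex.I)) (b : ℂ)) R‖ = 1 →
          deriv (fIsing d (Complex.exp (θ * Complex.I)) (b : ℂ)) R = 1 ∧
          R ^ 2 + (((d : ℂ) * ((b : ℂ) ^ 2 - 1) + (1 + (b : ℂ) ^ 2)) / (b : ℂ)) * R + 1 = 0 ∧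
          fIsing d (Complex.exp (-(θ * Complex.I))) (b : ℂ) (starRingEnd ℂ R) =
            starRingEnd ℂ R ∧
          ‖deriv (fIsing d (Complex.exp (-(θ * Complex.I))) (b : ℂ))
            (starRingEnd ℂ R)‖ = 1) := by
  have hb₀ : 0 < b := (div_nonneg (by linarith [(Nat.ofNat_le_cast.2 hd : (2 : ℝ) ≤ d)])
    (by positivity)).trans_lt hb₁
  have hb : |b| < 1 := abs_lt.2 ⟨by linarith, hb₂⟩
  have parabolic : ∀ {ξ R : ℂ}, ‖R‖ = 1 → IsFixedPt (fIsing d ξ b) R →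
      ‖deriv (fIsing d ξ b) R‖ = 1 →
        deriv (fIsing d ξ b) R = 1 ∧ normSq (R + b) = d * (1 - b ^ 2) := fun hR hfix h => by
    have h1 := deriv_fIsing_eq_one_of_norm_eq_one hb hR hfix h
    exact ⟨h1, (deriv_fIsing_eq_one_iff hb.ne hR hfix).1 h1⟩
  obtain ⟨θ, hθ, A, hA, hfixA, hσA⟩ := exists_isFixedPt_fIsing_exp hd hb₁ hb₂
  refine ⟨θ, hθ, ⟨A, hA, hfixA, ?_⟩, ?_, ?_⟩
  · rw [(deriv_fIsing_eq_one_iff hb.ne hA hfixA).2 hσA, norm_one]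
  · rintro θ' hθ' ⟨R, hR, hfix, hder⟩
    exact eq_of_isFixedPt_fIsing_exp hb₀ hb₂ hθ hθ' hA hR hfixA hfix
      ((parabolic hR hfix hder).2.trans hσA.symm)
  · intro R hR hfix hder
    obtain ⟨hder₁, hσ⟩ := parabolic hR hfix hder
    have hfixc : IsFixedPt (fIsing d (exp (-(θ * I))) b) (conj R) := by
      rw [← conj_exp_ofReal_mul_I]
      exact isFixedPt_fIsing_conj hfix
    have hσc : normSq (conj R + b) = d * (1 - b ^ 2) := by
      rw [← conj_ofReal, ← map_add, normSq_conj, hσ]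
    refine ⟨hder₁, ?_, hfixc, ?_⟩
    · convert quadratic_of_normSq_add_eq hR hb₀.ne' hσ using 3
      push_cast
      ring
    · rw [(deriv_fIsing_eq_one_iff hb.ne (by rwa [norm_conj]) hfixc).2 hσc, norm_one]
end

section
/- (Theorem 3.2(i), anti-ferromagnetic invariant arc) Let d ≥ 2 be an integer and let b ∈ (1, (d+1)/(d−1)). Then there exists α_b ∈ (0,π), namely the smallest α ∈ (0,π) satisfying e^{iα}·((e^{iα}+b)/(b·e^{iα}+1))^d = 1, such that for every θ ∈ (−α_b, α_b) and ξ = e^{iθ}, the shortest closed circular arc I ⊂ ∂𝔻 with boundary points 1 and ξ (i.e. I = {e^{it} : t between 0 and θ}) satisfies f_{ξ,b}(I) ⊆ I. In particular, the orbit of ξ under f_{ξ,b} avoids −1: f_{ξ,b}^{∘n}(ξ) ≠ −1 for all n ≥ 0. -/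
/-- The closed circular arc `{e^{it} : t between 0 and s}` on the unit circle; its
boundary points are `1` and `e^{is}`. -/
def circArc (s : ℝ) : Set ℂ := (fun t : ℝ => Complex.exp (t * Complex.I)) '' Set.uIcc 0 s

open Complex Set
open scoped Real ComplexConjugate

noncomputable def mobiusAngle (b t : ℝ) : ℝ := t - 2 * arg (1 + b * exp (t * I))

section MobiusAngle

variable {b : ℝ}

lemma one_add_mul_exp_ne_zero (hb : |b| ≠ 1) (t : ℝ) : 1 + b * exp (t * I) ≠ 0 := by
  intro h
  have h' : ‖(b : ℂ) * exp (t * I)‖ = ‖(-1 : ℂ)‖ := by rw [eq_neg_of_add_eq_zero_right h]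
  simp [norm_exp_ofReal_mul_I] at h'
  exact hb h'

lemma conj_eq_exp_mul_self (z : ℂ) : conj z = exp (-(2 * arg z) * I) * z := by
  have hconj : conj z = ‖z‖ * exp (-arg z * I) := by
    conv_lhs => rw [← norm_mul_exp_arg_mul_I z]
    rw [map_mul, conj_ofReal, ← exp_conj, map_mul, conj_ofReal, conj_I, mul_neg, neg_mul]
  conv_rhs => arg 2; rw [← norm_mul_exp_arg_mul_I z]
  rw [hconj, mul_left_comm, ← exp_add]
  ring_nf

lemma div_eq_exp_mobiusAngle (hb : |b| ≠ 1) (t : ℝ) :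
    (exp (t * I) + b) / (b * exp (t * I) + 1) = exp (mobiusAngle b t * I) := by
  have hw := one_add_mul_exp_ne_zero hb t
  have hnum : exp (t * I) + b = exp (t * I) * conj (1 + b * exp (t * I)) := by
    rw [map_add, map_one, map_mul, conj_ofReal, ← exp_conj, mul_add, mul_one, mul_left_comm,
      ← exp_add]
    simp
  rw [hnum, conj_eq_exp_mul_self, add_comm (_ * _), mul_div_assoc, mul_div_cancel_right₀ _ hw,
    ← exp_add, mobiusAngle]
  push_cast
  ring_nf

lemma fIsing_exp_mul_I (d : ℕ) (hb : |b| ≠ 1) (θ t : ℝ) :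
    fIsing d (exp (θ * I)) b (exp (t * I)) = exp ((θ + d * mobiusAngle b t) * I) := by
  rw [fIsing, div_eq_exp_mobiusAngle hb, ← exp_nat_mul, ← exp_add]
  ring_nf

lemma one_add_mul_exp_mem_slitPlane (hb : -1 < b) {t : ℝ} (ht : t ∈ Ioo (-π) π) :
    1 + b * exp (t * I) ∈ slitPlane := by
  rw [mem_slitPlane_iff]
  simp only [add_re, add_im, one_re, one_im, re_ofReal_mul, im_ofReal_mul, exp_ofReal_mul_I_re,
    exp_ofReal_mul_I_im, zero_add]
  by_cases hbt : b * Real.sin t = 0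
  · left
    rcases mul_eq_zero.1 hbt with hb0 | hsin
    · simp [hb0]
    · rw [(Real.sin_eq_zero_iff_of_lt_of_lt ht.1 ht.2).1 hsin, Real.cos_zero]
      linarith
  · exact Or.inr hbt

lemma normSq_one_add_mul_exp (b t : ℝ) :
    normSq (1 + b * exp (t * I)) = b ^ 2 + 2 * b * Real.cos t + 1 := by
  simp only [normSq_apply, add_re, add_im, one_re, one_im, re_ofReal_mul, im_ofReal_mul,
    exp_ofReal_mul_I_re, exp_ofReal_mul_I_im]
  linear_combination b ^ 2 * Real.sin_sq_add_cos_sq t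

lemma hasDerivAt_mobiusAngle (hb : -1 < b) {t : ℝ} (ht : t ∈ Ioo (-π) π) :
    HasDerivAt (mobiusAngle b) ((1 - b ^ 2) / (b ^ 2 + 2 * b * Real.cos t + 1)) t := by
  have hslit := one_add_mul_exp_mem_slitPlane hb ht
  have hw : HasDerivAt (fun s : ℝ => 1 + b * exp (s * I)) (b * exp (t * I) * I) t := by
    simpa [mul_assoc] using
      (((hasDerivAt_id t).ofReal_comp.mul_const I).cexp.const_mul (b : ℂ)).const_add 1
  have hlog : HasDerivAt (fun s : ℝ => (log (1 + b * exp (s * I))).im)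
      ((b * exp (t * I) * I) / (1 + b * exp (t * I))).im t :=
    imCLM.hasFDerivAt.comp_hasDerivAt t (hw.clog_real hslit)
  simp only [log_im] at hlog
  have hN : b ^ 2 + 2 * b * Real.cos t + 1 ≠ 0 := by
    rw [← normSq_one_add_mul_exp]
    exact (normSq_pos.2 (slitPlane_ne_zero hslit)).ne'
  refine ((hasDerivAt_id t).sub (hlog.const_mul 2)).congr_deriv ?_
  rw [div_im, normSq_one_add_mul_exp]
  simp only [mul_re, mul_im, exp_ofReal_mul_I_re, exp_ofReal_mul_I_im, ofReal_re,
    ofReal_im, I_re, I_im, add_re, add_im, one_re, one_im, zero_mul, mul_zero, mul_one, sub_zero,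
    add_zero, zero_add, zero_sub]
  rw [div_sub_div_same, mul_div_assoc', one_sub_div hN]
  congr 1
  linear_combination -2 * b ^ 2 * Real.sin_sq_add_cos_sq t

lemma mobiusAngle_zero (hb : -1 < b) : mobiusAngle b 0 = 0 := by
  have h : 1 + b * exp ((0 : ℝ) * I) = ((1 + b : ℝ) : ℂ) := by simp
  rw [mobiusAngle, h, arg_ofReal_of_nonneg (by linarith)]
  ring

lemma mobiusAngle_neg (hb : -1 < b) {t : ℝ} (ht : t ∈ Ioo (-π) π) :
    mobiusAngle b (-t) = -mobiusAngle b t := by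
  have hconj : 1 + b * exp (↑(-t) * I) = conj (1 + b * exp (t * I)) := by
    simp [← exp_conj]
  rw [mobiusAngle, mobiusAngle, hconj, arg_conj,
    if_neg (mem_slitPlane_iff_arg.1 (one_add_mul_exp_mem_slitPlane hb ht)).1]
  ring

lemma one_add_mul_exp_pi (b : ℝ) : 1 + b * exp (π * I) = ((1 - b : ℝ) : ℂ) := by
  rw [exp_pi_mul_I]
  push_cast
  ring

lemma mobiusAngle_pi (hb : 1 < b) : mobiusAngle b π = -π := by
  rw [mobiusAngle, one_add_mul_exp_pi, arg_ofReal_of_neg (by linarith)]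
  ring

lemma continuousWithinAt_mobiusAngle_pi (hb : 1 < b) :
    ContinuousWithinAt (mobiusAngle b) (Icc 0 π) π := by
  have hw : Continuous fun s : ℝ => 1 + b * exp (s * I) := by fun_prop
  have hmaps : MapsTo (fun s : ℝ => 1 + b * exp (s * I)) (Icc 0 π) {z : ℂ | 0 ≤ z.im} := by
    intro s hs
    simp only [mem_ofPred_eq, add_im, one_im, im_ofReal_mul, exp_ofReal_mul_I_im, zero_add]
    exact mul_nonneg (by linarith) (Real.sin_nonneg_of_nonneg_of_le_pi hs.1 hs.2)
  have harg : ContinuousWithinAt arg {z : ℂ | 0 ≤ z.im} (1 + b * exp (π * I)) := by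
    rw [one_add_mul_exp_pi]
    exact continuousWithinAt_arg_of_re_neg_of_im_zero (by simp; linarith) (by simp)
  exact continuousWithinAt_id.sub
    ((harg.comp (f := fun s : ℝ => 1 + b * exp (s * I)) hw.continuousWithinAt hmaps).const_mul 2)

lemma continuousOn_mobiusAngle (hb : 1 < b) : ContinuousOn (mobiusAngle b) (Icc 0 π) := by
  intro t ht
  rcases ht.2.lt_or_eq with htπ | rfl
  · exact (hasDerivAt_mobiusAngle (by linarith)
      ⟨by linarith [ht.1, Real.pi_pos], htπ⟩).continuousAt.continuousWithinAt
  · exact continuousWithinAt_mobiusAngle_pi hb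

lemma strictAntiOn_mobiusAngle (hb : 1 < b) : StrictAntiOn (mobiusAngle b) (Ioo (-π) π) := by
  refine strictAntiOn_of_deriv_neg (convex_Ioo _ _)
    (fun t ht => (hasDerivAt_mobiusAngle (by linarith) ht).continuousAt.continuousWithinAt)
    (fun t ht => ?_)
  rw [interior_Ioo] at ht
  rw [(hasDerivAt_mobiusAngle (by linarith) ht).deriv]
  exact div_neg_of_neg_of_pos (by nlinarith) (by nlinarith [Real.neg_one_le_cos t])

end MobiusAngle

noncomputable def endpointAngle (d : ℕ) (b t : ℝ) : ℝ := t + d * mobiusAngle b t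

section EndpointAngle

variable {d : ℕ} {b : ℝ}

lemma fIsing_exp_mul_I_self (hb : |b| ≠ 1) (t : ℝ) :
    fIsing d (exp (t * I)) b (exp (t * I)) = exp (endpointAngle d b t * I) := by
  rw [fIsing_exp_mul_I d hb, endpointAngle]
  push_cast
  rfl

lemma endpointAngle_zero (hb : -1 < b) : endpointAngle d b 0 = 0 := by
  simp [endpointAngle, mobiusAngle_zero hb]

lemma endpointAngle_pi (hb : 1 < b) : endpointAngle d b π = (1 - d) * π := by
  rw [endpointAngle, mobiusAngle_pi hb]
  ring

lemma hasDerivAt_endpointAngle (hb : -1 < b) {t : ℝ} (ht : t ∈ Ioo (-π) π) :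
    HasDerivAt (endpointAngle d b)
      (1 + d * ((1 - b ^ 2) / (b ^ 2 + 2 * b * Real.cos t + 1))) t :=
  (hasDerivAt_id t).add ((hasDerivAt_mobiusAngle hb ht).const_mul (d : ℝ))

lemma continuousOn_endpointAngle (hb : 1 < b) :
    ContinuousOn (endpointAngle d b) (Icc 0 π) :=
  continuousOn_id.add ((continuousOn_mobiusAngle hb).const_smul (d : ℝ))

lemma endpointAngle_le_self (hb : 1 < b) {t : ℝ} (ht : t ∈ Ico 0 π) :
    endpointAngle d b t ≤ t := by
  have hg : mobiusAngle b t ≤ mobiusAngle b 0 :=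
    (strictAntiOn_mobiusAngle hb).antitoneOn ⟨by linarith [Real.pi_pos], Real.pi_pos⟩
      ⟨by linarith [ht.1, Real.pi_pos], ht.2⟩ ht.1
  rw [mobiusAngle_zero (by linarith)] at hg
  have : (d : ℝ) * mobiusAngle b t ≤ 0 := mul_nonpos_of_nonneg_of_nonpos d.cast_nonneg hg
  rw [endpointAngle]
  linarith

lemma strictConcaveOn_endpointAngle (hd : d ≠ 0) (hb : 1 < b) :
    StrictConcaveOn ℝ (Icc 0 π) (endpointAngle d b) := by
  refine StrictAntiOn.strictConcaveOn_of_deriv (convex_Icc _ _)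
    (continuousOn_endpointAngle hb) ?_
  rw [interior_Icc]
  intro x hx y hy hxy
  have mem : ∀ {s}, s ∈ Ioo 0 π → s ∈ Ioo (-π) π :=
    fun hs => ⟨by linarith [hs.1, Real.pi_pos], hs.2⟩
  rw [(hasDerivAt_endpointAngle (by linarith) (mem hx)).deriv,
    (hasDerivAt_endpointAngle (by linarith) (mem hy)).deriv]
  have hcos : Real.cos y < Real.cos x :=
    Real.strictAntiOn_cos ⟨hx.1.le, hx.2.le⟩ ⟨hy.1.le, hy.2.le⟩ hxy
  have hquot : (1 - b ^ 2) / (b ^ 2 + 2 * b * Real.cos y + 1)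
      < (1 - b ^ 2) / (b ^ 2 + 2 * b * Real.cos x + 1) := by
    rw [div_lt_div_iff₀ (by nlinarith [Real.neg_one_le_cos y])
      (by nlinarith [Real.neg_one_le_cos x])]
    nlinarith [mul_pos (mul_pos (by linarith : (0 : ℝ) < 2 * b) (sub_pos.2 hcos))
      (by nlinarith : (0 : ℝ) < b ^ 2 - 1)]
  have hd' : (0 : ℝ) < d := by positivity
  linarith [mul_lt_mul_of_pos_left hquot hd']

lemma exists_endpointAngle_pos (hb : 1 < b) (hbd : b * (d - 1) < d + 1) :
    ∃ t ∈ Ioo 0 π, 0 < endpointAngle d b t := by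
  have hderiv := hasDerivAt_endpointAngle (d := d) (by linarith)
    ⟨neg_lt_zero.2 Real.pi_pos, Real.pi_pos⟩
  have hpos : 0 < 1 + d * ((1 - b ^ 2) / (b ^ 2 + 2 * b * Real.cos 0 + 1)) := by
    rw [Real.cos_zero, show b ^ 2 + 2 * b * 1 + 1 = (1 + b) * (1 + b) by ring,
      show 1 - b ^ 2 = (1 - b) * (1 + b) by ring, mul_div_mul_right _ _ (by linarith)]
    rw [← sub_pos] at hbd
    have : 0 < 1 + b := by linarith
    field_simp
    linarith
  have hslope := hderiv.tendsto_slope_zero_right.eventually (lt_mem_nhds hpos)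
  obtain ⟨t, hslope_t, ht⟩ := (hslope.and (Ioo_mem_nhdsGT Real.pi_pos)).exists
  refine ⟨t, ht, ?_⟩
  rw [zero_add, endpointAngle_zero (by linarith), sub_zero, smul_eq_mul] at hslope_t
  exact (mul_pos_iff_of_pos_left (inv_pos.2 ht.1)).1 hslope_t

lemma exists_endpointAngle_eq_zero (hd : 1 < d) (hb : 1 < b) (hbd : b * (d - 1) < d + 1) :
    ∃ α ∈ Ioo 0 π, endpointAngle d b α = 0 ∧ ∀ t ∈ Ioo 0 α, 0 < endpointAngle d b t := by
  obtain ⟨t₀, ht₀, hGt₀⟩ := exists_endpointAngle_pos hb hbd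
  have hGπ : endpointAngle d b π < 0 := by
    have : (1 : ℝ) < d := by exact_mod_cast hd
    rw [endpointAngle_pi hb]
    nlinarith [Real.pi_pos]
  obtain ⟨α, hα, hGα⟩ := intermediate_value_Icc' ht₀.2.le
    ((continuousOn_endpointAngle hb).mono (Icc_subset_Icc ht₀.1.le le_rfl)) ⟨hGπ.le, hGt₀.le⟩
  have hαπ : α ≠ π := by rintro rfl; linarith
  refine ⟨α, ⟨ht₀.1.trans_le hα.1, hα.2.lt_of_ne hαπ⟩, hGα, fun t ht => ?_⟩
  have hα₀ : α ∈ Icc 0 π := ⟨(ht₀.1.trans_le hα.1).le, hα.2⟩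
  have hsegment : t ∈ openSegment ℝ 0 α := by
    rw [openSegment_eq_Ioo (ht₀.1.trans_le hα.1)]
    exact ht
  simpa [endpointAngle_zero (d := d) (by linarith : -1 < b), hGα] using
    (strictConcaveOn_endpointAngle (d := d) (by omega) hb).lt_on_openSegment
      ⟨le_rfl, Real.pi_pos.le⟩ hα₀ (ht₀.1.trans_le hα.1).ne hsegment

lemma add_mul_mobiusAngle_mem_Icc (hb : 1 < b) {θ : ℝ} (hθ : θ ∈ Ico 0 π)
    (hG : 0 ≤ endpointAngle d b θ) {t : ℝ} (ht : t ∈ Icc 0 θ) :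
    θ + d * mobiusAngle b t ∈ Icc 0 θ := by
  have anti := (strictAntiOn_mobiusAngle hb).antitoneOn
  have mem : ∀ {s}, s ∈ Icc 0 θ → s ∈ Ioo (-π) π :=
    fun hs => ⟨by linarith [hs.1, Real.pi_pos], by linarith [hs.2, hθ.2]⟩
  have hlow : mobiusAngle b θ ≤ mobiusAngle b t :=
    anti (mem ht) (mem (right_mem_Icc.2 hθ.1)) ht.2
  have hup : mobiusAngle b t ≤ 0 := by
    rw [← mobiusAngle_zero (b := b) (by linarith)]
    exact anti (mem (left_mem_Icc.2 hθ.1)) (mem ht) ht.1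
  have hd : (0 : ℝ) ≤ d := d.cast_nonneg
  rw [endpointAngle] at hG
  constructor <;> nlinarith

lemma add_mul_mobiusAngle_mem_uIcc (hb : 1 < b) {θ : ℝ} (hθ : |θ| < π)
    (hG : 0 ≤ endpointAngle d b |θ|) {t : ℝ} (ht : t ∈ uIcc 0 θ) :
    θ + d * mobiusAngle b t ∈ uIcc 0 θ := by
  rcases le_total 0 θ with h | h
  · rw [abs_of_nonneg h] at hθ hG
    rw [uIcc_of_le h] at ht ⊢
    exact add_mul_mobiusAngle_mem_Icc hb ⟨h, hθ⟩ hG ht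
  · rw [abs_of_nonpos h] at hθ hG
    rw [uIcc_of_ge h] at ht ⊢
    have hneg := add_mul_mobiusAngle_mem_Icc hb ⟨neg_nonneg.2 h, hθ⟩ hG
      (t := -t) ⟨by linarith [ht.2], by linarith [ht.1]⟩
    rw [mobiusAngle_neg (by linarith) ⟨by linarith [ht.1], by linarith [ht.2]⟩] at hneg
    constructor <;> linarith [hneg.1, hneg.2]

lemma mapsTo_circArc (hb : 1 < b) {θ : ℝ} (hθ : |θ| < π) (hG : 0 ≤ endpointAngle d b |θ|) :
    MapsTo (fIsing d (exp (θ * I)) b) (circArc θ) (circArc θ) := by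
  rintro _ ⟨t, ht, rfl⟩
  rw [fIsing_exp_mul_I d (by rw [abs_of_pos (by linarith)]; exact hb.ne')]
  exact ⟨_, add_mul_mobiusAngle_mem_uIcc hb hθ hG ht, by push_cast; rfl⟩

end EndpointAngle

lemma neg_one_notMem_circArc {θ : ℝ} (hθ : |θ| < π) : -1 ∉ circArc θ := by
  rintro ⟨t, ht, h⟩
  have ht' : |t| < π := by
    simpa using (abs_sub_left_of_mem_uIcc ht).trans_lt (by simpa using hθ)
  have harg := congrArg arg h
  rw [arg_neg_one, arg_exp_mul_I, (toIocMod_eq_self _).2] at harg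
  · rw [harg, abs_of_pos Real.pi_pos] at ht'
    exact ht'.false
  · constructor <;> linarith [abs_lt.1 ht']

lemma exp_mul_I_ne_one {x : ℝ} (h₀ : 0 < x) (h₁ : x < 2 * π) : exp (x * I) ≠ 1 := by
  intro h
  have hcos : Real.cos x = 1 := by simpa using congrArg re h
  exact h₀.ne' ((Real.cos_eq_one_iff_of_lt_of_lt (by linarith) h₁).1 hcos)

/-- Theorem 3.2(i): for `b ∈ (1, (d+1)/(d-1))` there is `α_b ∈ (0,π)`, the smallest
solution of `e^{iα}·((e^{iα}+b)/(be^{iα}+1))^d = 1` in `(0,π)`, such that for every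
`θ ∈ (-α_b, α_b)` and `ξ = e^{iθ}` the shortest closed arc with boundary points `1` and
`ξ` is forward invariant under `f_{ξ,b}`; in particular the orbit of `ξ` avoids `-1`. -/
theorem fIsing_antiferro_invariant_arc (d : ℕ) (hd : 2 ≤ d) (b : ℝ)
    (hb₁ : 1 < b) (hb₂ : b < ((d : ℝ) + 1) / ((d : ℝ) - 1)) :
    ∃ αb : ℝ, αb ∈ Set.Ioo 0 Real.pi ∧
      fIsing d (Complex.exp (αb * Complex.I)) (b : ℂ) (Complex.exp (αb * Complex.I)) = 1 ∧
      (∀ α ∈ Set.Ioo 0 Real.pi,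
        fIsing d (Complex.exp (α * Complex.I)) (b : ℂ) (Complex.exp (α * Complex.I)) = 1 →
        αb ≤ α) ∧
      ∀ θ : ℝ, -αb < θ → θ < αb →
        Set.MapsTo (fIsing d (Complex.exp (θ * Complex.I)) (b : ℂ))
          (circArc θ) (circArc θ) ∧
        ∀ n : ℕ, (fIsing d (Complex.exp (θ * Complex.I)) (b : ℂ))^[n]
          (Complex.exp (θ * Complex.I)) ≠ -1 := by
  have hb : |b| ≠ 1 := by rw [abs_of_pos (by linarith)]; exact hb₁.ne'
  have hbd : b * (d - 1) < d + 1 := by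
    have : (1 : ℝ) < d := by exact_mod_cast hd
    rwa [lt_div_iff₀ (by linarith)] at hb₂
  obtain ⟨αb, hαb, hGαb, hGpos⟩ := exists_endpointAngle_eq_zero hd hb₁ hbd
  refine ⟨αb, hαb, by simp [fIsing_exp_mul_I_self hb, hGαb], ?_, ?_⟩
  · intro α hα hfα
    by_contra! hlt
    rw [fIsing_exp_mul_I_self hb] at hfα
    refine exp_mul_I_ne_one (hGpos α ⟨hα.1, hlt⟩) ?_ hfα
    linarith [endpointAngle_le_self (d := d) hb₁ (Ioo_subset_Ico_self hα), hα.2, Real.pi_pos]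
  · intro θ hθ₁ hθ₂
    have hθ : |θ| < αb := abs_lt.2 ⟨hθ₁, hθ₂⟩
    have hG : 0 ≤ endpointAngle d b |θ| := by
      rcases (abs_nonneg θ).eq_or_lt with h | h
      · rw [← h, endpointAngle_zero (by linarith)]
      · exact (hGpos _ ⟨h, hθ⟩).le
    have hmaps := mapsTo_circArc hb₁ (hθ.trans hαb.2) hG
    refine ⟨hmaps, fun n h => neg_one_notMem_circArc (hθ.trans hαb.2) ?_⟩
    rw [← h]
    exact hmaps.iterate n ⟨θ, right_mem_uIcc, rfl⟩
end

section
/- (Theorem 3.2(ii), maximality in the anti-ferromagnetic case) Let d ≥ 2 be an integer, let b ∈ (1, (d+1)/(d−1)), and let α_b ∈ (0,π) be the smallest α ∈ (0,π) satisfying e^{iα}·((e^{iα}+b)/(b·e^{iα}+1))^d = 1. Then the set of parameters ξ ∈ ℂ for which there exists n ≥ 0 with f_{ξ,b}^{∘n}(ξ) = −1 (iterates taken in the Riemann sphere) accumulates on e^{iα_b} and on e^{−iα_b}: for every ε > 0 there exist such ξ with |ξ − e^{iα_b}| < ε, and likewise for e^{−iα_b}. -/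
/-!
On the unit circle `f_{e^{iθ},b}` lifts to `t ↦ θ + d·H(t)` on `ℝ`, where `H = isingArg b` is a
continuous argument of `(e^{it}+b)/(be^{it}+1)`: odd, decreasing, with `H' = -(b²-1)/|e^{it}+b|²`.
The equation defining `α_b` says `F(α_b) ∈ 2πℤ` for `F(α) = α + d·H(α)`; as `b < (d+1)/(d-1)`
makes `F'(0) > 0`, minimality of `α_b` forces `F(α_b) = 0`. So for `θ = α_b` the lifted orbit of
`θ` is the two-cycle `α_b ↦ 0 ↦ α_b`, which is repelling because `sin (d x) < d sin x`, and the
second iterate keeps expanding on `[α_b, π]`. Hence for `θ` slightly larger than `α_b` the lifted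
orbit of `θ` climbs past `π`, and the intermediate value theorem gives parameters arbitrarily
close to `α_b` whose orbit hits `e^{iπ} = -1`. Oddness of `H` handles `e^{-iα_b}`.
-/

open Real Set

/-- `isingQ b s = ‖e^{is} + b‖²`. -/
noncomputable def isingQ (b s : ℝ) : ℝ := b ^ 2 + 1 + 2 * b * cos s

lemma isingQ_pos {b : ℝ} (hb : 1 < b) (s : ℝ) : 0 < isingQ b s := by
  unfold isingQ; nlinarith [neg_one_le_cos s]

lemma isingQ_zero (b : ℝ) : isingQ b 0 = (b + 1) ^ 2 := by
  simp only [isingQ, cos_zero]; ring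

lemma isingQ_le_sq {b : ℝ} (hb : 0 ≤ b) (s : ℝ) : isingQ b s ≤ (b + 1) ^ 2 := by
  unfold isingQ; nlinarith [cos_le_one s]

lemma isingQ_le_of_le {b p t : ℝ} (hb : 0 ≤ b) (hp : 0 ≤ p) (hpt : p ≤ t) (ht : t ≤ π) :
    isingQ b t ≤ isingQ b p := by
  unfold isingQ; nlinarith [cos_le_cos_of_nonneg_of_le_pi hp ht hpt]

lemma one_add_ofReal_mul_I_ne_zero (x : ℝ) : 1 + x * Complex.I ≠ 0 := by
  intro h; simpa using congrArg Complex.re h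

lemma exp_two_arctan_mul_I (x : ℝ) :
    Complex.exp (2 * Real.arctan x * Complex.I) * (1 - x * Complex.I) = 1 + x * Complex.I := by
  have hsub : 1 - x * Complex.I ≠ 0 := by
    simpa [sub_eq_add_neg] using one_add_ofReal_mul_I_ne_zero (-x)
  have hne : (1 + x * Complex.I) / (1 - x * Complex.I) ≠ 0 :=
    div_ne_zero (one_add_ofReal_mul_I_ne_zero x) hsub
  rw [← eq_div_iff hsub, Complex.ofReal_arctan, Complex.arctan]
  convert Complex.exp_log hne using 2
  ring_nf
  rw [Complex.I_sq]
  ring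

/-- A continuous branch of `arg ((e^{it} + b) / (b e^{it} + 1))` when `1 < b`. -/
noncomputable def isingArg (b t : ℝ) : ℝ := 2 * arctan (sin t / (b + cos t)) - t

lemma add_cos_pos {b : ℝ} (hb : 1 < b) (t : ℝ) : 0 < b + cos t := by
  linarith [neg_one_le_cos t]

lemma exp_isingArg_mul_I {b : ℝ} (hb : 1 < b) (t : ℝ) :
    Complex.exp (isingArg b t * Complex.I) * (b * Complex.exp (t * Complex.I) + 1) =
      Complex.exp (t * Complex.I) + b := by
  set x := sin t / (b + cos t) with hx
  have hxB : (x : ℂ) * (b + (cos t : ℂ)) = sin t := by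
    exact_mod_cast div_mul_cancel₀ (sin t) (add_cos_pos hb t).ne'
  have key := exp_two_arctan_mul_I x
  have pyth : (sin t : ℂ) ^ 2 + (cos t : ℂ) ^ 2 = 1 := by exact_mod_cast sin_sq_add_cos_sq t
  rw [isingArg, ← hx, Complex.ofReal_sub, Complex.ofReal_mul, sub_mul, Complex.exp_sub,
    Complex.ofReal_ofNat, div_mul_eq_mul_div, div_eq_iff (Complex.exp_ne_zero _)]
  set E := Complex.exp (2 * Real.arctan x * Complex.I)
  rw [Complex.exp_mul_I, ← Complex.ofReal_cos, ← Complex.ofReal_sin]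
  -- `b e^{it} + 1 = e^{it} (b + cos t) (1 - x i)` and `(b + cos t) (1 + x i) = e^{it} + b`
  linear_combination (norm := skip) (-E) * pyth
    + (E + 1) * (cos t + sin t * Complex.I) * Complex.I * hxB
    + (cos t + sin t * Complex.I) * (b + cos t) * key
  ring_nf
  rw [Complex.I_sq]
  ring

lemma hasDerivAt_isingArg {b : ℝ} (hb : 1 < b) (t : ℝ) :
    HasDerivAt (isingArg b) (-(b ^ 2 - 1) / isingQ b t) t := by
  have hB := (add_cos_pos hb t).ne'
  have hquot : HasDerivAt (fun t => sin t / (b + cos t))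
      ((cos t * (b + cos t) - sin t * -sin t) / (b + cos t) ^ 2) t :=
    (hasDerivAt_sin t).div ((hasDerivAt_cos t).const_add b) hB
  refine ((hquot.arctan.const_mul 2).sub (hasDerivAt_id t)).congr_deriv ?_
  have hQ : isingQ b t = (b + cos t) ^ 2 + sin t ^ 2 := by
    unfold isingQ; linear_combination -sin_sq_add_cos_sq t
  rw [hQ]
  field_simp
  linear_combination sin_sq_add_cos_sq t

lemma isingArg_zero (b : ℝ) : isingArg b 0 = 0 := by simp [isingArg]

lemma isingArg_neg (b t : ℝ) : isingArg b (-t) = -isingArg b t := by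
  simp only [isingArg, sin_neg, cos_neg, neg_div, arctan_neg]; ring

lemma continuous_isingArg {b : ℝ} (hb : 1 < b) : Continuous (isingArg b) :=
  continuous_iff_continuousAt.2 fun t => (hasDerivAt_isingArg hb t).continuousAt

lemma strictAnti_isingArg {b : ℝ} (hb : 1 < b) : StrictAnti (isingArg b) :=
  strictAnti_of_hasDerivAt_neg (hasDerivAt_isingArg hb) fun t =>
    div_neg_of_neg_of_pos (by nlinarith) (isingQ_pos hb t)

noncomputable def isingLift (d : ℕ) (b θ t : ℝ) : ℝ := θ + d * isingArg b t

lemma isingLift_semiconj {b : ℝ} (hb : 1 < b) (d : ℕ) (θ : ℝ) :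
    Function.Semiconj (fun t : ℝ => Complex.exp (t * Complex.I)) (isingLift d b θ)
      (fIsing d (Complex.exp (θ * Complex.I)) b) := by
  intro t
  have h := exp_isingArg_mul_I hb t
  have hden : (b : ℂ) * Complex.exp (t * Complex.I) + 1 ≠ 0 := by
    intro h0
    have hb2 : (b : ℂ) ^ 2 = 1 := by
      linear_combination (b * Complex.exp (isingArg b t * Complex.I) - 1) * h0 - b * h
    have : b ^ 2 = 1 := by exact_mod_cast hb2
    nlinarith
  rw [← eq_div_iff hden] at h
  simp only [isingLift, fIsing, ← h, ← Complex.exp_nat_mul, ← Complex.exp_add]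
  push_cast
  ring_nf

lemma fIsing_iterate_exp {b : ℝ} (hb : 1 < b) (d n : ℕ) (θ : ℝ) :
    (fIsing d (Complex.exp (θ * Complex.I)) b)^[n] (Complex.exp (θ * Complex.I)) =
      Complex.exp ((isingLift d b θ)^[n] θ * Complex.I) :=
  ((isingLift_semiconj hb d θ).iterate_right n θ).symm

lemma isingLift_iterate_neg (d n : ℕ) (b θ : ℝ) :
    (isingLift d b (-θ))^[n] (-θ) = -(isingLift d b θ)^[n] θ := by
  have h : Function.Semiconj Neg.neg (isingLift d b θ) (isingLift d b (-θ)) := fun t => by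
    simp only [isingLift, isingArg_neg]; ring
  exact (h.iterate_right n θ).symm

lemma continuous_isingLift_iterate_self {b : ℝ} (hb : 1 < b) (d n : ℕ) :
    Continuous fun θ => (isingLift d b θ)^[n] θ := by
  induction n with
  | zero => exact continuous_id
  | succ n ih =>
    simp only [Function.iterate_succ_apply', isingLift]
    exact continuous_id.add (continuous_const.mul ((continuous_isingArg hb).comp ih))

lemma fIsing_exp_self_eq_one_iff {b : ℝ} (hb : 1 < b) (d : ℕ) (α : ℝ) :
    fIsing d (Complex.exp (α * Complex.I)) b (Complex.exp (α * Complex.I)) = 1 ↔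
      ∃ k : ℤ, isingLift d b α α = k * (2 * π) := by
  rw [← isingLift_semiconj hb d α α, Complex.exp_eq_one_iff]
  refine exists_congr fun k => ⟨fun h => ?_, fun h => by rw [h]; push_cast; ring⟩
  have h' : (isingLift d b α α : ℂ) * Complex.I = ((k * (2 * π) : ℝ) : ℂ) * Complex.I := by
    rw [h]; push_cast; ring
  exact_mod_cast mul_right_cancel₀ Complex.I_ne_zero h'

lemma hasDerivAt_isingLift_self {b : ℝ} (hb : 1 < b) (d : ℕ) (α : ℝ) :
    HasDerivAt (fun α => isingLift d b α α) (1 + d * (-(b ^ 2 - 1) / isingQ b α)) α :=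
  (hasDerivAt_id α).add ((hasDerivAt_isingArg hb α).const_mul _)

lemma continuous_isingLift_self {b : ℝ} (hb : 1 < b) (d : ℕ) :
    Continuous fun α => isingLift d b α α :=
  continuous_iff_continuousAt.2 fun α => (hasDerivAt_isingLift_self hb d α).continuousAt

lemma exists_isingLift_self_pos {d : ℕ} {b p : ℝ} (hb : 1 < b) (hdb : d * (b - 1) < b + 1)
    (hp : 0 < p) : ∃ α ∈ Ioo 0 p, 0 < isingLift d b α α := by
  have hderiv : 0 < 1 + d * (-(b ^ 2 - 1) / isingQ b 0) := by
    have hQ : (b ^ 2 - 1) / isingQ b 0 = (b - 1) / (b + 1) := by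
      rw [isingQ_zero]; field_simp; ring
    rw [neg_div, hQ, mul_neg, ← sub_eq_add_neg, sub_pos, ← mul_div_assoc,
      div_lt_one (by linarith)]
    exact hdb
  have hslope := (hasDerivAt_iff_tendsto_slope.1 (hasDerivAt_isingLift_self hb d 0)).mono_left
    (nhdsGT_le_nhdsNE 0)
  obtain ⟨α, hα, hαp⟩ :=
    ((hslope.eventually (eventually_gt_nhds hderiv)).and (Ioo_mem_nhdsGT hp)).exists
  exact ⟨α, hαp, pos_of_slope_pos (f := fun α => isingLift d b α α) hαp.1 hα
    (by simp [isingLift, isingArg_zero])⟩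

lemma isingLift_self_le {d : ℕ} {b p : ℝ} (hb : 1 < b) (hp : 0 ≤ p) :
    isingLift d b p p ≤ p := by
  have h : isingArg b p ≤ 0 := isingArg_zero b ▸ (strictAnti_isingArg hb).antitone hp
  have hd : (0 : ℝ) ≤ d := d.cast_nonneg
  unfold isingLift; nlinarith

/-- Otherwise `isingLift d b p p ≤ -2π`, while `α ↦ isingLift d b α α` is positive just to the
right of `0`; the intermediate value theorem then gives a solution smaller than `p`. -/
lemma isingLift_self_eq_zero {d : ℕ} {b p : ℝ} (hb : 1 < b) (hdb : d * (b - 1) < b + 1)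
    (hp : p ∈ Ioo 0 π)
    (heq : fIsing d (Complex.exp (p * Complex.I)) b (Complex.exp (p * Complex.I)) = 1)
    (hmin : ∀ α ∈ Ioo 0 π,
      fIsing d (Complex.exp (α * Complex.I)) b (Complex.exp (α * Complex.I)) = 1 → p ≤ α) :
    isingLift d b p p = 0 := by
  obtain ⟨k, hk⟩ := (fIsing_exp_self_eq_one_iff hb d p).1 heq
  by_contra hne
  have hneg : isingLift d b p p < 0 := by
    have hle := isingLift_self_le (d := d) hb hp.1.le
    rcases lt_trichotomy k 0 with hk0 | rfl | hk0
    · rw [hk]; exact mul_neg_of_neg_of_pos (by exact_mod_cast hk0) (by positivity)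
    · simp at hk; exact absurd hk hne
    · have : (1 : ℝ) ≤ k := by exact_mod_cast hk0
      nlinarith [hp.2, pi_pos]
  obtain ⟨α₁, hα₁, hpos⟩ := exists_isingLift_self_pos hb hdb hp.1
  obtain ⟨α, hα, hα0⟩ := intermediate_value_Icc' hα₁.2.le
    (continuous_isingLift_self hb d).continuousOn ⟨hneg.le, hpos.le⟩
  have hαp : p ≤ α := hmin α ⟨hα₁.1.trans_le hα.1, hα.2.trans_lt hp.2⟩
    ((fIsing_exp_self_eq_one_iff hb d α).2 ⟨0, by simpa using hα0⟩)
  exact hne (le_antisymm hα.2 hαp ▸ hα0)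

lemma sin_mul_lt_mul_sin {r u : ℝ} (hr : 1 < r) (hu : 0 < u) (hru : r * u ≤ π) :
    sin (r * u) < r * sin u := by
  have hr0 : 0 < r := zero_lt_one.trans hr
  have h := strictConcaveOn_sin_Icc.2 (⟨by positivity, hru⟩ : r * u ∈ Icc 0 π)
    (⟨le_rfl, pi_pos.le⟩ : (0 : ℝ) ∈ Icc 0 π) (by positivity) (inv_pos.2 hr0)
    (sub_pos.2 (inv_lt_one_of_one_lt₀ hr)) (add_sub_cancel r⁻¹ 1)
  rw [smul_eq_mul, smul_eq_mul, smul_eq_mul, smul_eq_mul, inv_mul_cancel_left₀ hr0.ne', mul_zero,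
    add_zero, sin_zero, mul_zero, add_zero] at h
  calc sin (r * u) = r * (r⁻¹ * sin (r * u)) := by field_simp
    _ < r * sin u := by gcongr

/-- `htan` says that `(b + 1) cos (p/2) + i (b - 1) sin (p/2)`, whose squared modulus is
`isingQ b p`, has argument `u`; the conclusion compares imaginary parts. -/
lemma isingQ_mul_sin_sq {b p u : ℝ}
    (htan : sin (p / 2 - u) * (b + cos p) = sin p * cos (p / 2 - u)) :
    isingQ b p * sin u ^ 2 = (b - 1) ^ 2 * sin (p / 2) ^ 2 := by
  have hsin : sin p = 2 * sin (p / 2) * cos (p / 2) := by rw [← sin_two_mul]; ring_nf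
  have hcos : cos p = 2 * cos (p / 2) ^ 2 - 1 := by rw [← cos_two_mul]; ring_nf
  rw [sin_sub, cos_sub, hsin, hcos] at htan
  rw [isingQ, hcos]
  set S := sin (p / 2)
  set C := cos (p / 2)
  have pythS : S ^ 2 + C ^ 2 = 1 := sin_sq_add_cos_sq _
  have pythU : sin u ^ 2 + cos u ^ 2 = 1 := sin_sq_add_cos_sq _
  have hR : (b - 1) * S * cos u - (b + 1) * C * sin u = 0 := by
    linear_combination htan + 2 * C * sin u * pythS
  linear_combination (-((b + 1) * C * sin u + (b - 1) * S * cos u)) * hR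
    - (b - 1) ^ 2 * sin u ^ 2 * pythS + (b - 1) ^ 2 * S ^ 2 * pythU

lemma isingQ_lt_of_isingLift_self_eq_zero {d : ℕ} {b p : ℝ} (hb : 1 < b) (hd : 1 < (d : ℝ))
    (hp : p ∈ Ioo 0 π) (hF : isingLift d b p p = 0) : isingQ b p < d ^ 2 * (b - 1) ^ 2 := by
  obtain ⟨hp0, hpπ⟩ := hp
  have hd0 : (0 : ℝ) < d := zero_lt_one.trans hd
  set u := p / (2 * d) with hu_def
  have hu : 0 < u := by positivity
  have hdu : d * u = p / 2 := by rw [hu_def]; field_simp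
  have hup : u < p / 2 := by nlinarith
  have harctan : arctan (sin p / (b + cos p)) = p / 2 - u := by
    unfold isingLift isingArg at hF
    rw [hu_def]
    field_simp
    linear_combination hF
  have hcos : 0 < cos (p / 2 - u) := cos_pos_of_mem_Ioo ⟨by linarith, by linarith⟩
  have htan : sin (p / 2 - u) * (b + cos p) = sin p * cos (p / 2 - u) := by
    have h := tan_arctan (sin p / (b + cos p))
    rw [harctan, tan_eq_sin_div_cos, div_eq_div_iff hcos.ne' (add_cos_pos hb p).ne'] at h
    exact h
  have hsin_u : 0 < sin u := sin_pos_of_pos_of_lt_pi hu (by linarith)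
  have hsin_p : 0 < sin (p / 2) := sin_pos_of_pos_of_lt_pi (by linarith) (by linarith)
  have hS : sin (p / 2) < d * sin u := hdu ▸ sin_mul_lt_mul_sin hd hu (by linarith)
  have hb1 : 0 < (b - 1) ^ 2 := by nlinarith
  refine lt_of_mul_lt_mul_right ?_ (sq_nonneg (sin u))
  calc isingQ b p * sin u ^ 2 = (b - 1) ^ 2 * sin (p / 2) ^ 2 := isingQ_mul_sin_sq htan
    _ < (b - 1) ^ 2 * (d * sin u) ^ 2 := by gcongr
    _ = d ^ 2 * (b - 1) ^ 2 * sin u ^ 2 := by ring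

lemma exists_iterate_gt_of_monotoneOn_sub {G : ℝ → ℝ} {a c : ℝ}
    (hG : MonotoneOn (fun t => G t - t) (Icc a c)) (ha : a < G a) : ∃ k, c < G^[k] a := by
  by_contra! h
  have hlow : ∀ k : ℕ, a + k * (G a - a) ≤ G^[k] a := by
    intro k
    induction k with
    | zero => simp
    | succ k ih =>
      have hmem : G^[k] a ∈ Icc a c := ⟨le_trans (by nlinarith) ih, h k⟩
      have hstep := hG ⟨le_rfl, h 0⟩ hmem hmem.1
      rw [Function.iterate_succ_apply']
      push_cast
      linarith
  obtain ⟨k, hk⟩ := exists_nat_gt ((c - a) / (G a - a))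
  rw [div_lt_iff₀ (sub_pos.2 ha)] at hk
  linarith [hlow k, h k]

lemma hasDerivAt_isingLift {b : ℝ} (hb : 1 < b) (d : ℕ) (θ t : ℝ) :
    HasDerivAt (isingLift d b θ) (d * (-(b ^ 2 - 1) / isingQ b t)) t :=
  ((hasDerivAt_isingArg hb t).const_mul _).const_add θ

/-- On `[p, π]` the derivative of the second iterate is at least `d² (b - 1)² / isingQ b p`. -/
lemma monotoneOn_isingLift_two_sub {d : ℕ} {b p : ℝ} (hb : 1 < b) (hp : 0 ≤ p)
    (hQ : isingQ b p ≤ d ^ 2 * (b - 1) ^ 2) (θ : ℝ) :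
    MonotoneOn (fun t => isingLift d b θ (isingLift d b θ t) - t) (Icc p π) := by
  have hderiv : ∀ t, HasDerivAt (fun t => isingLift d b θ (isingLift d b θ t) - t)
      (d * (-(b ^ 2 - 1) / isingQ b (isingLift d b θ t)) * (d * (-(b ^ 2 - 1) / isingQ b t)) - 1)
      t := fun t =>
    ((hasDerivAt_isingLift hb d θ _).comp t (hasDerivAt_isingLift hb d θ t)).sub (hasDerivAt_id t)
  refine monotoneOn_of_hasDerivWithinAt_nonneg (convex_Icc p π)
    (fun t _ => (hderiv t).continuousAt.continuousWithinAt)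
    (fun t _ => (hderiv t).hasDerivWithinAt) fun t ht => ?_
  rw [interior_Icc] at ht
  have hx := isingQ_pos hb (isingLift d b θ t)
  have hy := isingQ_pos hb t
  have hxy : isingQ b (isingLift d b θ t) * isingQ b t ≤ (d * (b ^ 2 - 1)) ^ 2 :=
    calc _ ≤ (b + 1) ^ 2 * (d ^ 2 * (b - 1) ^ 2) :=
          mul_le_mul (isingQ_le_sq (by linarith) _)
            ((isingQ_le_of_le (by linarith) hp ht.1.le ht.2.le).trans hQ) hy.le (by positivity)
      _ = (d * (b ^ 2 - 1)) ^ 2 := by ring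
  rw [sub_nonneg, show d * (-(b ^ 2 - 1) / isingQ b (isingLift d b θ t)) *
      (d * (-(b ^ 2 - 1) / isingQ b t)) = (d * (b ^ 2 - 1)) ^ 2 /
        (isingQ b (isingLift d b θ t) * isingQ b t) by field_simp,
    one_le_div (by positivity)]
  exact hxy

lemma lt_isingLift_isingLift_self {d : ℕ} {b p θ : ℝ} (hb : 1 < b) (hd : 0 < d)
    (hdb : d * (b - 1) < b + 1) (hp : 0 ≤ p) (hF : isingLift d b p p = 0)
    (hQ : isingQ b p < d ^ 2 * (b - 1) ^ 2) (hθ : θ ∈ Ioc p π) :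
    θ < isingLift d b θ (isingLift d b θ θ) := by
  have hanti : StrictAntiOn (fun α => isingLift d b α α) (Icc p π) := by
    refine strictAntiOn_of_hasDerivWithinAt_neg (convex_Icc p π)
      (continuous_isingLift_self hb d).continuousOn
      (fun t _ => (hasDerivAt_isingLift_self hb d t).hasDerivWithinAt) fun t ht => ?_
    rw [interior_Icc] at ht
    have hQt := isingQ_pos hb t
    have hlt : isingQ b t < d * (b ^ 2 - 1) :=
      calc isingQ b t ≤ isingQ b p := isingQ_le_of_le (by linarith) hp ht.1.le ht.2.le
        _ < d ^ 2 * (b - 1) ^ 2 := hQ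
        _ ≤ d * (b ^ 2 - 1) := by
          have : (0 : ℝ) < d * (b - 1) := by positivity
          nlinarith
    rw [mul_div_assoc', mul_neg, neg_div, ← sub_eq_add_neg, sub_neg, one_lt_div hQt]
    exact hlt
  have hneg : isingLift d b θ θ < 0 :=
    hF ▸ hanti ⟨le_rfl, hθ.1.le.trans hθ.2⟩ ⟨hθ.1.le, hθ.2⟩ hθ.1
  have hpos : 0 < isingArg b (isingLift d b θ θ) := isingArg_zero b ▸ strictAnti_isingArg hb hneg
  have : (0 : ℝ) < d := by exact_mod_cast hd
  unfold isingLift at *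
  nlinarith

lemma isingLift_iterate_two_mul_self {d : ℕ} {b p : ℝ} (hF : isingLift d b p p = 0) (k : ℕ) :
    (isingLift d b p)^[2 * k] p = p := by
  rw [Function.iterate_mul]
  refine Function.iterate_fixed ?_ k
  show isingLift d b p (isingLift d b p p) = p
  rw [hF, isingLift, isingArg_zero, mul_zero, add_zero]

lemma exists_mem_Icc_isingLift_iterate_eq_pi {d : ℕ} {b p θ : ℝ} (hb : 1 < b) (hd : 0 < d)
    (hdb : d * (b - 1) < b + 1) (hp : p ∈ Ioo 0 π) (hF : isingLift d b p p = 0)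
    (hQ : isingQ b p < d ^ 2 * (b - 1) ^ 2) (hθ : θ ∈ Ioc p π) :
    ∃ θ' ∈ Icc p θ, ∃ n, (isingLift d b θ')^[n] θ' = π := by
  obtain ⟨k, hk⟩ : ∃ k, π < (isingLift d b θ)^[2 * k] θ := by
    simp only [Function.iterate_mul]
    exact exists_iterate_gt_of_monotoneOn_sub
      ((monotoneOn_isingLift_two_sub hb hp.1.le hQ.le θ).mono (Icc_subset_Icc_left hθ.1.le))
      (lt_isingLift_isingLift_self hb hd hdb hp.1.le hF hQ hθ)
  obtain ⟨θ', hθ', heq⟩ := intermediate_value_Icc hθ.1.le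
    (continuous_isingLift_iterate_self hb d (2 * k)).continuousOn
    ⟨(isingLift_iterate_two_mul_self hF k).symm ▸ hp.2.le, hk.le⟩
  exact ⟨θ', hθ', 2 * k, heq⟩

lemma mem_closure_isingLift_iterate_eq_pi {d : ℕ} {b p : ℝ} (hb : 1 < b) (hd : 0 < d)
    (hdb : d * (b - 1) < b + 1) (hp : p ∈ Ioo 0 π) (hF : isingLift d b p p = 0)
    (hQ : isingQ b p < d ^ 2 * (b - 1) ^ 2) :
    p ∈ closure {θ | ∃ n, (isingLift d b θ)^[n] θ = π} := by
  refine Metric.mem_closure_iff.2 fun ε hε => ?_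
  set δ := min (ε / 2) (π - p)
  have hδ : 0 < δ := lt_min (half_pos hε) (sub_pos.2 hp.2)
  obtain ⟨θ, hθ, hθπ⟩ := exists_mem_Icc_isingLift_iterate_eq_pi hb hd hdb hp hF hQ
    (θ := p + δ) ⟨by linarith, by linarith [min_le_right (ε / 2) (π - p)]⟩
  refine ⟨θ, hθπ, ?_⟩
  rw [Real.dist_eq, abs_sub_comm, abs_of_nonneg (by linarith [hθ.1])]
  linarith [hθ.2, min_le_left (ε / 2) (π - p)]

lemma exists_norm_sub_lt_of_mem_closure {X E : Type*} [TopologicalSpace X]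
    [SeminormedAddCommGroup E] {f : X → E} (hf : Continuous f) {s : Set X} {x : X}
    (hx : x ∈ closure s) {ε : ℝ} (hε : 0 < ε) : ∃ y ∈ s, ‖f y - f x‖ < ε := by
  obtain ⟨_, ⟨y, hy, rfl⟩, h⟩ :=
    Metric.mem_closure_iff.1 (image_closure_subset_closure_image hf ⟨x, hx, rfl⟩) ε hε
  exact ⟨y, hy, by rwa [dist_comm, dist_eq_norm] at h⟩

lemma fIsing_iterate_exp_eq_neg_one {b θ : ℝ} (hb : 1 < b) {d n : ℕ}
    (hn : (isingLift d b θ)^[n] θ = π) :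
    (fIsing d (Complex.exp (θ * Complex.I)) b)^[n] (Complex.exp (θ * Complex.I)) = -1 ∧
      (fIsing d (Complex.exp (-(θ * Complex.I))) b)^[n] (Complex.exp (-(θ * Complex.I))) = -1 := by
  have hneg : -((θ : ℂ) * Complex.I) = ((-θ : ℝ) : ℂ) * Complex.I := by push_cast; ring
  refine ⟨?_, ?_⟩
  · rw [fIsing_iterate_exp hb, hn, Complex.exp_pi_mul_I]
  · rw [hneg, fIsing_iterate_exp hb, isingLift_iterate_neg, hn, Complex.ofReal_neg, neg_mul,
      Complex.exp_neg, Complex.exp_pi_mul_I]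
    norm_num

/-- Theorem 3.2(ii): for `b ∈ (1, (d+1)/(d-1))` and `α_b ∈ (0,π)` the smallest solution
of `e^{iα}·((e^{iα}+b)/(be^{iα}+1))^d = 1` in `(0,π)`, the parameters `ξ ∈ ℂ` whose orbit
under `f_{ξ,b}` lands on `-1` accumulate on `e^{iα_b}` and on `e^{-iα_b}`. -/
theorem fIsing_antiferro_bad_parameters_accumulate (d : ℕ) (hd : 2 ≤ d) (b : ℝ)
    (hb₁ : 1 < b) (hb₂ : b < ((d : ℝ) + 1) / ((d : ℝ) - 1))
    (αb : ℝ) (hαb : αb ∈ Set.Ioo 0 Real.pi)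
    (heq : fIsing d (Complex.exp (αb * Complex.I)) (b : ℂ)
      (Complex.exp (αb * Complex.I)) = 1)
    (hmin : ∀ α ∈ Set.Ioo 0 Real.pi,
      fIsing d (Complex.exp (α * Complex.I)) (b : ℂ) (Complex.exp (α * Complex.I)) = 1 →
      αb ≤ α) :
    ∀ ε : ℝ, 0 < ε →
      (∃ ξ : ℂ, ‖ξ - Complex.exp (αb * Complex.I)‖ < ε ∧
        ∃ n : ℕ, (fIsing d ξ (b : ℂ))^[n] ξ = -1) ∧
      (∃ ξ : ℂ, ‖ξ - Complex.exp (-(αb * Complex.I))‖ < ε ∧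
        ∃ n : ℕ, (fIsing d ξ (b : ℂ))^[n] ξ = -1) := by
  intro ε hε
  have hd1 : (1 : ℝ) < d := by exact_mod_cast hd
  have hdb : (d : ℝ) * (b - 1) < b + 1 := by
    rw [lt_div_iff₀ (by linarith)] at hb₂
    linarith
  have hF := isingLift_self_eq_zero hb₁ hdb hαb heq hmin
  have hacc := mem_closure_isingLift_iterate_eq_pi hb₁ (by omega) hdb hαb hF
    (isingQ_lt_of_isingLift_self_eq_zero hb₁ hd1 hαb hF)
  obtain ⟨θ₁, ⟨n₁, hn₁⟩, hθ₁⟩ := exists_norm_sub_lt_of_mem_closure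
    (by fun_prop : Continuous fun θ : ℝ => Complex.exp (θ * Complex.I)) hacc hε
  obtain ⟨θ₂, ⟨n₂, hn₂⟩, hθ₂⟩ := exists_norm_sub_lt_of_mem_closure
    (by fun_prop : Continuous fun θ : ℝ => Complex.exp (-(θ * Complex.I))) hacc hε
  exact ⟨⟨_, hθ₁, n₁, (fIsing_iterate_exp_eq_neg_one hb₁ hn₁).1⟩,
    ⟨_, hθ₂, n₂, (fIsing_iterate_exp_eq_neg_one hb₁ hn₂).2⟩⟩
end

section
/- (Proposition 3.10, density of bad parameters for small b) Let d ≥ 2 be an integer and let b ∈ ℝ with 0 < b ≤ (d−1)/(d+1). Then the set of parameters ξ ∈ ∂𝔻 for which the orbit of ξ under f_{ξ,b} takes the value −1 (i.e. there exists n ≥ 0 with f_{ξ,b}^{∘n}(ξ) = −1) is dense in the unit circle ∂𝔻. -/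
/-!
On the unit circle, `R ↦ (R + b) / (b R + 1)` is a circle diffeomorphism lifted by
`mobiusLift b`, whose derivative `(1 - b²) / |1 + b e^{iα}|²` is at least
`(1 - |b|) / (1 + |b|)`. For `ξ = e^{iθ}` the orbit point `f_{ξ,b}^n(ξ)` equals `e^{i G_n(θ)}`,
where `G_{n+1}(θ) = θ + d · mobiusLift b (G_n(θ))`; the parameter enters through the summand
`θ`. If `d (1 - b) / (1 + b) ≥ 1`, i.e. `b ≤ (d - 1) / (d + 1)`, then `G_n` stretches every
interval by a factor at least `n + 1`, so on any interval of length `> 2π / (n + 1)` it takes an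
odd multiple of `π`, which is a parameter `ξ` with `f_{ξ,b}^n(ξ) = -1`.
-/

open Complex Set

theorem exp_neg_two_arctan_mul_I (u : ℝ) :
    exp ((-(2 * Real.arctan u) : ℝ) * I) = (1 - u * I) / (1 + u * I) := by
  set t := Real.arctan u
  have hc : Complex.cos t ≠ 0 := by exact_mod_cast (Real.cos_arctan_pos u).ne'
  have hu : (u : ℂ) = Complex.sin t / Complex.cos t := by
    rw [← Complex.tan_eq_sin_div_cos, ← Complex.ofReal_tan, Real.tan_arctan]
  have hexp : exp ((-(2 * t) : ℝ) * I) = (Complex.cos t - Complex.sin t * I) ^ 2 := by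
    rw [show ((-(2 * t) : ℝ) : ℂ) * I = ((2 : ℕ) : ℂ) * ((-t : ℝ) * I) by push_cast; ring,
      Complex.exp_nat_mul, Complex.exp_mul_I]
    push_cast [Complex.cos_neg, Complex.sin_neg]
    ring
  have hden : (1 : ℂ) + u * I ≠ 0 := by
    intro h; simpa using congrArg Complex.re h
  rw [eq_div_iff hden, hexp, hu]
  field_simp
  linear_combination (Complex.cos t - Complex.sin t * I) * Complex.cos_sq_add_sin_sq (t : ℂ)
    + (Complex.sin t ^ 3 * I - Complex.cos t * Complex.sin t ^ 2) * Complex.I_sq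

noncomputable def mobiusLift (b α : ℝ) : ℝ :=
  α - 2 * Real.arctan (b * Real.sin α / (1 + b * Real.cos α))

section mobiusLift

variable {b : ℝ}

theorem abs_mul_cos_le (b α : ℝ) : |b * Real.cos α| ≤ |b| := by
  rw [abs_mul]
  exact mul_le_of_le_one_right (abs_nonneg b) (Real.abs_cos_le_one α)

theorem one_add_mul_cos_pos (hb : |b| < 1) (α : ℝ) : 0 < 1 + b * Real.cos α := by
  linarith [neg_abs_le (b * Real.cos α), abs_mul_cos_le b α]

theorem one_add_two_mul_cos_add_sq_pos (hb : |b| < 1) (α : ℝ) :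
    0 < 1 + 2 * b * Real.cos α + b ^ 2 := by
  nlinarith [pow_pos (one_add_mul_cos_pos hb α) 2, sq_nonneg (b * Real.sin α),
    Real.sin_sq_add_cos_sq α]

theorem exp_mobiusLift_mul_I (hb : |b| < 1) (α : ℝ) :
    exp (mobiusLift b α * I) = (exp (α * I) + b) / (b * exp (α * I) + 1) := by
  set u := b * Real.sin α / (1 + b * Real.cos α) with hu
  have hsplit : (mobiusLift b α : ℂ) * I = α * I + ((-(2 * Real.arctan u) : ℝ) : ℂ) * I := by
    rw [mobiusLift, ← hu]; push_cast; ring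
  have hden : b * exp (α * I) + 1 ≠ 0 := by
    intro h
    have hre := congrArg Complex.re h
    simp only [add_re, re_ofReal_mul, exp_ofReal_mul_I_re, one_re, zero_re] at hre
    linarith [one_add_mul_cos_pos hb α]
  have hu1 : (1 : ℂ) + u * I ≠ 0 := by
    intro h; simpa using congrArg Complex.re h
  have hD : (1 : ℂ) + Complex.cos α * b ≠ 0 := by
    rw [mul_comm]; exact_mod_cast (one_add_mul_cos_pos hb α).ne'
  rw [hsplit, exp_add, exp_neg_two_arctan_mul_I, ← mul_div_assoc, div_eq_div_iff hu1 hden,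
    Complex.exp_mul_I, hu]
  push_cast
  field_simp
  set e := Complex.cos α + Complex.sin α * I
  -- with `ē = cos α - sin α * I`, the two sides are `e (1 + b ē) (b e + 1)` and
  -- `(e + b) (1 + b e)`, equal since `e ē = cos² α + sin² α = 1`
  linear_combination (b * e + 1) * b * Complex.cos_sq_add_sin_sq (α : ℂ)
    - (b * e + 1) * b * Complex.sin α ^ 2 * Complex.I_sq

theorem one_sub_abs_div_one_add_abs_le (hb : |b| < 1) (α : ℝ) :
    (1 - |b|) / (1 + |b|) ≤ (1 - b ^ 2) / (1 + 2 * b * Real.cos α + b ^ 2) := by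
  have hcos : b * Real.cos α ≤ |b| := (le_abs_self _).trans (abs_mul_cos_le b α)
  rw [div_le_div_iff₀ (by positivity) (one_add_two_mul_cos_add_sq_pos hb α)]
  nlinarith [mul_le_mul_of_nonneg_left hcos (sub_nonneg.2 hb.le), sq_abs b]

theorem hasDerivAt_mobiusLift (hb : |b| < 1) (α : ℝ) :
    HasDerivAt (mobiusLift b) ((1 - b ^ 2) / (1 + 2 * b * Real.cos α + b ^ 2)) α := by
  have hD := (one_add_mul_cos_pos hb α).ne'
  have hQ := (one_add_two_mul_cos_add_sq_pos hb α).ne'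
  have hquot := ((Real.hasDerivAt_sin α).const_mul b).div
    (((Real.hasDerivAt_cos α).const_mul b).const_add 1) hD
  refine ((hasDerivAt_id α).sub (hquot.arctan.const_mul 2)).congr_deriv ?_
  have hpyth := Real.sin_sq_add_cos_sq α
  have hsq : 1 + (b * Real.sin α / (1 + b * Real.cos α)) ^ 2 =
      (1 + 2 * b * Real.cos α + b ^ 2) / (1 + b * Real.cos α) ^ 2 := by
    field_simp
    linear_combination b ^ 2 * hpyth
  have hnum : b * Real.cos α * (1 + b * Real.cos α) - b * Real.sin α * (b * -Real.sin α) =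
      b * Real.cos α + b ^ 2 := by
    linear_combination b ^ 2 * hpyth
  simp only [Pi.div_apply]
  rw [hsq, hnum]
  field_simp
  ring

theorem mul_sub_le_mobiusLift_sub (hb : |b| < 1) {x y : ℝ} (hxy : x ≤ y) :
    (1 - |b|) / (1 + |b|) * (y - x) ≤ mobiusLift b y - mobiusLift b x :=
  mul_sub_le_image_sub_of_le_deriv (fun α => (hasDerivAt_mobiusLift hb α).differentiableAt)
    (fun α => (hasDerivAt_mobiusLift hb α).deriv ▸ one_sub_abs_div_one_add_abs_le hb α) hxy

end mobiusLift

noncomputable def orbitLift (d : ℕ) (b : ℝ) : ℕ → ℝ → ℝ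
  | 0 => fun θ => θ
  | n + 1 => fun θ => θ + d * mobiusLift b (orbitLift d b n θ)

section orbitLift

variable {d : ℕ} {b : ℝ}

theorem iterate_fIsing_exp_mul_I (hb : |b| < 1) (n : ℕ) (θ : ℝ) :
    (fIsing d (exp (θ * I)) b)^[n] (exp (θ * I)) = exp (orbitLift d b n θ * I) := by
  induction n with
  | zero => rfl
  | succ n ih =>
    rw [Function.iterate_succ_apply', ih, fIsing, ← exp_mobiusLift_mul_I hb, ← exp_nat_mul,
      ← exp_add, orbitLift]
    push_cast
    ring_nf

theorem continuous_orbitLift (hb : |b| < 1) (n : ℕ) : Continuous (orbitLift d b n) := by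
  have hh : Continuous (mobiusLift b) :=
    continuous_iff_continuousAt.2 fun α => (hasDerivAt_mobiusLift hb α).continuousAt
  induction n with
  | zero => exact continuous_id
  | succ n ih => exact continuous_id.add (continuous_const.mul (hh.comp ih))

theorem mul_sub_le_orbitLift_sub (hb : |b| < 1) (hd : 1 ≤ d * ((1 - |b|) / (1 + |b|)))
    (n : ℕ) {x y : ℝ} (hxy : x ≤ y) :
    (n + 1) * (y - x) ≤ orbitLift d b n y - orbitLift d b n x := by
  induction n with
  | zero => simp [orbitLift]
  | succ n ih =>
    have hmono := mul_sub_le_mobiusLift_sub hb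
      (le_of_sub_nonneg ((mul_nonneg (by positivity) (sub_nonneg.2 hxy)).trans ih))
    have hgrowth : (n + 1) * (y - x) ≤
        d * (mobiusLift b (orbitLift d b n y) - mobiusLift b (orbitLift d b n x)) :=
      calc (n + 1) * (y - x) ≤ d * ((1 - |b|) / (1 + |b|)) * ((n + 1) * (y - x)) :=
            le_mul_of_one_le_left (by positivity) hd
        _ ≤ d * ((1 - |b|) / (1 + |b|)) * (orbitLift d b n y - orbitLift d b n x) := by
            gcongr
        _ ≤ _ := by rw [mul_assoc]; gcongr
    simp only [orbitLift]
    push_cast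
    linarith

end orbitLift

theorem exists_mem_Ioo_exp_mul_I_eq_neg_one {g : ℝ → ℝ} (hg : Continuous g) {x y : ℝ}
    (hxy : x ≤ y) (hgxy : g x + 2 * Real.pi < g y) :
    ∃ θ ∈ Ioo x y, exp (g θ * I) = -1 := by
  obtain ⟨k, hk, -⟩ := existsUnique_add_zsmul_mem_Ioc Real.two_pi_pos Real.pi (g x)
  obtain ⟨θ, hθ, hgθ⟩ := intermediate_value_Ioo hxy hg.continuousOn ⟨hk.1, hk.2.trans_lt hgxy⟩
  refine ⟨θ, hθ, ?_⟩
  rw [hgθ, zsmul_eq_mul]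
  push_cast
  rw [show ((Real.pi : ℂ) + k * (2 * Real.pi)) * I = Real.pi * I + k * (2 * Real.pi * I) by ring,
    exp_add, exp_int_mul_two_pi_mul_I, exp_pi_mul_I, mul_one]

theorem dense_setOf_exp_orbitLift_eq_neg_one {d : ℕ} {b : ℝ} (hb : |b| < 1)
    (hd : 1 ≤ d * ((1 - |b|) / (1 + |b|))) :
    Dense {θ : ℝ | ∃ n, exp (orbitLift d b n θ * I) = -1} := by
  refine dense_of_exists_between fun x y hxy => ?_
  obtain ⟨n, hn⟩ := exists_nat_gt (2 * Real.pi / (y - x))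
  have hstretch : orbitLift d b n x + 2 * Real.pi < orbitLift d b n y := by
    have := mul_sub_le_orbitLift_sub hb hd n hxy.le
    rw [div_lt_iff₀ (sub_pos.2 hxy)] at hn
    nlinarith
  obtain ⟨θ, hθ, hθn⟩ :=
    exists_mem_Ioo_exp_mul_I_eq_neg_one (continuous_orbitLift hb n) hxy.le hstretch
  exact ⟨θ, ⟨n, hθn⟩, hθ⟩

theorem fIsing_bad_parameters_dense_small_b_general (d : ℕ) (b : ℝ)
    (hb₁ : 0 < b) (hb₂ : b ≤ ((d : ℝ) - 1) / ((d : ℝ) + 1)) :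
    Metric.sphere (0 : ℂ) 1 ⊆
      closure {ξ : ℂ | ‖ξ‖ = 1 ∧
        ∃ n : ℕ, (fIsing d ξ (b : ℂ))^[n] ξ = -1} := by
  have hd1 : (0 : ℝ) < d + 1 := by positivity
  have hbd : b * (d + 1) ≤ d - 1 := (le_div_iff₀ hd1).1 hb₂
  have hb : |b| < 1 := by rw [abs_of_pos hb₁]; nlinarith
  have hd : 1 ≤ d * ((1 - |b|) / (1 + |b|)) := by
    rw [abs_of_pos hb₁, mul_div_assoc', le_div_iff₀ (by linarith)]
    linarith
  have hbad : (fun θ : ℝ => exp (θ * I)) '' {θ | ∃ n, exp (orbitLift d b n θ * I) = -1} ⊆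
      {ξ : ℂ | ‖ξ‖ = 1 ∧ ∃ n : ℕ, (fIsing d ξ (b : ℂ))^[n] ξ = -1} := by
    rintro _ ⟨θ, ⟨n, hn⟩, rfl⟩
    exact ⟨norm_exp_ofReal_mul_I θ, n, by rwa [iterate_fIsing_exp_mul_I hb]⟩
  rw [← range_exp_mul_I]
  rintro _ ⟨θ, rfl⟩
  refine closure_mono hbad (image_closure_subset_closure_image (by fun_prop) ⟨θ, ?_, rfl⟩)
  rw [(dense_setOf_exp_orbitLift_eq_neg_one hb hd).closure_eq]
  trivial

/-- Proposition 3.10: for `0 < b ≤ (d-1)/(d+1)` the parameters `ξ` on the unit circle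
whose orbit under `f_{ξ,b}` takes the value `-1` are dense in the unit circle. -/
theorem fIsing_bad_parameters_dense_small_b (d : ℕ) (hd : 2 ≤ d) (b : ℝ)
    (hb₁ : 0 < b) (hb₂ : b ≤ ((d : ℝ) - 1) / ((d : ℝ) + 1)) :
    Metric.sphere (0 : ℂ) 1 ⊆
      closure {ξ : ℂ | ‖ξ‖ = 1 ∧
        ∃ n : ℕ, (fIsing d ξ (b : ℂ))^[n] ξ = -1} :=
  fIsing_bad_parameters_dense_small_b_general d b hb₁ hb₂
end
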